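/- arXiv:2412.01648 — 5 statements merged into one kernel-verified Lean document; each statement's English description precedes it below -/
import Mathlib

section
/- Let λ_k denote the largest real root of P_k(x) = x^(2k+1) − 2x^(k+1) − 2x^k + 1 (which exists and is > 1). Then the sequence λ_k^(2k+1) converges to (2 + √3)² = 7 + 4√3 as k → ∞. -/
open Filter Real

noncomputable def Faux (x : ℝ) : ℝ := (x + 1 + Real.sqrt (x^2 + x + 1))^2 / x

lemma key_aux (l t : ℝ) (hl : 1 < l) (ht : 1 < t)
    (heq : l * t^2 - 2*(l+1)*t + 1 = 0) :
    t = (l + 1 + Real.sqrt (l^2 + l + 1)) / l := by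
  have hl0 : (0:ℝ) < l := by linarith
  set s := Real.sqrt (l^2 + l + 1) with hs
  have hsnn : (0:ℝ) ≤ l^2 + l + 1 := by nlinarith
  have hs2 : s^2 = l^2 + l + 1 := Real.sq_sqrt hsnn
  have hsnneg : 0 ≤ s := Real.sqrt_nonneg _
  have hs1 : 1 < s := by nlinarith
  have hfac : (l*t - (l+1) - s) * (l*t - (l+1) + s) = 0 := by
    linear_combination l * heq - hs2
  rcases mul_eq_zero.1 hfac with h | h
  · field_simp
    linarith
  · exfalso
    have : l * t > l * 1 := by
      exact mul_lt_mul_of_pos_left ht hl0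
    nlinarith

theorem stmt3 (lam : ℕ → ℝ)
    (h : ∀ k : ℕ, 1 ≤ k →
      1 < lam k ∧
      (lam k) ^ (2*k+1) - 2 * (lam k) ^ (k+1) - 2 * (lam k) ^ k + 1 = 0 ∧
      (∀ y : ℝ, y ^ (2*k+1) - 2 * y ^ (k+1) - 2 * y ^ k + 1 = 0 → y ≤ lam k)) :
    Filter.Tendsto (fun k : ℕ => (lam k) ^ (2*k+1)) Filter.atTop
      (nhds ((2 + Real.sqrt 3) ^ 2)) := by
  -- Step 1: eventual identity lam k ^ (2k+1) = Faux (lam k)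
  have hmain : ∀ k, 1 ≤ k → lam k ^ (2*k+1) = Faux (lam k) := by
    intro k hk
    obtain ⟨h1, h2, -⟩ := h k hk
    have hl0 : (0:ℝ) < lam k := lt_trans one_pos h1
    have hlne : lam k ≠ 0 := ne_of_gt hl0
    have ht : 1 < lam k ^ k := one_lt_pow₀ h1 (by omega)
    have e1 : lam k ^ (2*k+1) = (lam k ^ k)^2 * lam k := by
      rw [show 2*k+1 = k*2+1 by ring, pow_succ, pow_mul]
    have e2 : lam k ^ (k+1) = lam k ^ k * lam k := pow_succ _ _
    rw [e1, e2] at h2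
    have heq : lam k * (lam k ^ k)^2 - 2*(lam k + 1)*(lam k ^ k) + 1 = 0 := by
      linear_combination h2
    have hteq := key_aux (lam k) (lam k ^ k) h1 ht heq
    rw [e1, hteq, Faux]
    field_simp
  -- Step 2: lam k → 1
  have hlim : Tendsto lam atTop (nhds 1) := by
    have hub : ∀ k, 1 ≤ k → lam k ≤ Real.exp (Real.log 4 / k) := by
      intro k hk
      obtain ⟨h1, h2, -⟩ := h k hk
      have hl0 : (0:ℝ) < lam k := lt_trans one_pos h1
      have hAB : lam k ^ k ≤ lam k ^ (k+1) :=
        pow_le_pow_right₀ (le_of_lt h1) (Nat.le_succ k)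
      have hA1 : 1 < lam k ^ k := one_lt_pow₀ h1 (by omega)
      have hB0 : (0:ℝ) < lam k ^ (k+1) := pow_pos hl0 _
      have e3 : lam k ^ (2*k+1) = lam k ^ k * lam k ^ (k+1) := by
        rw [← pow_add]; congr 1; omega
      rw [e3] at h2
      have hA4 : lam k ^ k < 4 := by nlinarith
      have hlog : Real.log (lam k ^ k) ≤ Real.log 4 :=
        Real.log_le_log (pow_pos hl0 k) hA4.le
      rw [Real.log_pow] at hlog
      have hk0 : (0:ℝ) < (k:ℝ) := by exact_mod_cast hk
      have hlog2 : Real.log (lam k) ≤ Real.log 4 / k := by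
        rw [le_div_iff₀ hk0]
        calc Real.log (lam k) * k = (k:ℝ) * Real.log (lam k) := by ring
          _ ≤ Real.log 4 := hlog
      calc lam k = Real.exp (Real.log (lam k)) := (Real.exp_log hl0).symm
        _ ≤ Real.exp (Real.log 4 / k) := Real.exp_le_exp.2 hlog2
    have hlb : ∀ᶠ k in atTop, (1:ℝ) ≤ lam k := by
      filter_upwards [eventually_ge_atTop 1] with k hk
      exact le_of_lt (h k hk).1
    have hub' : ∀ᶠ k in atTop, lam k ≤ Real.exp (Real.log 4 / k) := by
      filter_upwards [eventually_ge_atTop 1] with k hk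
      exact hub k hk
    have htend : Tendsto (fun k : ℕ => Real.exp (Real.log 4 / k)) atTop (nhds 1) := by
      have h0 : Tendsto (fun k : ℕ => Real.log 4 / (k:ℝ)) atTop (nhds 0) :=
        tendsto_const_div_atTop_nhds_zero_nat _
      have := (Real.continuous_exp.continuousAt (x := (0:ℝ))).tendsto.comp h0
      simpa [Function.comp_def] using this
    exact tendsto_of_tendsto_of_tendsto_of_le_of_le' tendsto_const_nhds htend hlb hub'
  -- Step 3: continuity of Faux at 1 and value
  have hcont : ContinuousAt Faux 1 := by
    apply ContinuousAt.div
    · apply ContinuousAt.pow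
      apply ContinuousAt.add
      · exact (continuousAt_id.add continuousAt_const)
      · exact (Real.continuous_sqrt.continuousAt).comp (by fun_prop)
    · exact continuousAt_id
    · norm_num
  have hF1 : Faux 1 = (2 + Real.sqrt 3) ^ 2 := by
    simp only [Faux]
    norm_num
  have htend2 : Tendsto (fun k : ℕ => Faux (lam k)) atTop (nhds ((2 + Real.sqrt 3) ^ 2)) := by
    rw [← hF1]
    exact hcont.tendsto.comp hlim
  refine htend2.congr' ?_
  filter_upwards [eventually_ge_atTop 1] with k hk
  exact (hmain k hk).symm
end

section
/- The smallest positive real solution x of the equation (1 − 3√x)² − 4x(1 − 2√x)² = 0 is x = 1/16. (In the variable y = √x, the expression factors as (1 − 5y + 4y²)(1 − y − 4y²), and the smallest positive root of the first factor is y = 1/4.) -/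
theorem stmt8 :
    IsLeast {x : ℝ | 0 < x ∧ (1 - 3 * Real.sqrt x) ^ 2 - 4 * x * (1 - 2 * Real.sqrt x) ^ 2 = 0}
      (1/16) := by
  constructor
  · refine ⟨by norm_num, ?_⟩
    have h : Real.sqrt (1/16) = 1/4 := by
      rw [show (1/16 : ℝ) = (1/4)^2 by norm_num, Real.sqrt_sq (by norm_num)]
    rw [h]; norm_num
  · rintro x ⟨hx, heq⟩
    set y := Real.sqrt x with hy
    have hy0 : 0 ≤ y := Real.sqrt_nonneg x
    have hyx : y ^ 2 = x := Real.sq_sqrt hx.le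
    rw [← hyx] at heq hx ⊢
    have hfac : (1 - y) * (1 - 4*y) * (1 - y - 4*y^2) = 0 := by linear_combination heq
    have hy4 : 1/4 ≤ y := by
      by_contra h
      push_neg at h
      have h1 : 0 < 1 - y := by linarith
      have h2 : 0 < 1 - 4*y := by linarith
      have h3 : 0 < 1 - y - 4*y^2 := by nlinarith
      nlinarith [mul_pos (mul_pos h1 h2) h3]
    nlinarith
end

section
/- Let c = 1/(9 + 4√2). Then 4√(2c) = 1 + 7c, and for every real number a, 4c^a + 2c^(1−a) ≥ 1 + 7c. Consequently 1 − 4c^a − 2c^(1−a) + 7c ≤ 0 for all real a. -/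
theorem stmt9 (c : ℝ) (hc : c = (9 + 4 * Real.sqrt 2)⁻¹) :
    4 * Real.sqrt (2 * c) = 1 + 7 * c ∧
    (∀ a : ℝ, 1 + 7 * c ≤ 4 * c ^ a + 2 * c ^ (1 - a)) ∧
    (∀ a : ℝ, 1 - 4 * c ^ a - 2 * c ^ (1 - a) + 7 * c ≤ 0) := by
  have h2 : Real.sqrt 2 ^ 2 = 2 := Real.sq_sqrt (by norm_num)
  have h2nn : (0:ℝ) ≤ Real.sqrt 2 := Real.sqrt_nonneg 2
  have hcpos : 0 < c := by
    rw [hc]; positivity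
  have hcv : 32 * c = (1 + 7 * c) ^ 2 := by
    rw [hc]
    have h9 : (9 : ℝ) + 4 * Real.sqrt 2 ≠ 0 := by positivity
    field_simp
    nlinarith [h2, h2nn]
  have part1 : 4 * Real.sqrt (2 * c) = 1 + 7 * c := by
    have e1 : Real.sqrt (32 * c) = 4 * Real.sqrt (2 * c) := by
      rw [show (32:ℝ) * c = 4 ^ 2 * (2 * c) by ring,
        Real.sqrt_mul (by positivity), Real.sqrt_sq (by norm_num)]
    rw [← e1, hcv, Real.sqrt_sq (by positivity)]
  have part2 : ∀ a : ℝ, 1 + 7 * c ≤ 4 * c ^ a + 2 * c ^ (1 - a) := by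
    intro a
    set x := c ^ a with hx
    set y := c ^ (1 - a) with hy
    have hxpos : 0 < x := Real.rpow_pos_of_pos hcpos a
    have hypos : 0 < y := Real.rpow_pos_of_pos hcpos (1 - a)
    have hxy : x * y = c := by
      rw [hx, hy, ← Real.rpow_add hcpos]
      norm_num
    have hx2 : Real.sqrt x * Real.sqrt x = x := Real.mul_self_sqrt hxpos.le
    have hy2 : Real.sqrt (2 * y) * Real.sqrt (2 * y) = 2 * y :=
      Real.mul_self_sqrt (by positivity)
    have hcross : Real.sqrt x * Real.sqrt (2 * y) = Real.sqrt (2 * c) := by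
      rw [← Real.sqrt_mul hxpos.le]
      congr 1
      rw [← hxy]; ring
    nlinarith [sq_nonneg (2 * Real.sqrt x - Real.sqrt (2 * y)), hx2, hy2, hcross, part1]
  exact ⟨part1, part2, fun a => by linarith [part2 a]⟩
end

section
/- Set x = 1/16. For every real a with 0 ≤ a ≤ 1/2, we have 2x^a + x^(1−2a) − x^(2a) ≥ 1, with equality when a = 1/4. -/
theorem stmt10 (x : ℝ) (hx : x = 1/16) :
    (∀ a : ℝ, 0 ≤ a → a ≤ 1/2 → 1 ≤ 2 * x ^ a + x ^ (1 - 2*a) - x ^ (2*a)) ∧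
    2 * x ^ ((1:ℝ)/4) + x ^ (1 - 2*((1:ℝ)/4)) - x ^ (2*((1:ℝ)/4)) = 1 := by
  subst hx
  have hx0 : (0:ℝ) < 1/16 := by norm_num
  have hx1 : (1/16:ℝ) ≤ 1 := by norm_num
  have hquarter : ((1/16:ℝ)) ^ ((1:ℝ)/2) = 1/4 := by
    rw [show (1/16:ℝ) = (1/4:ℝ)^(2:ℕ) by norm_num, ← Real.rpow_natCast,
      ← Real.rpow_mul (by norm_num)]
    norm_num
  have key : ∀ a : ℝ, 0 ≤ a → a ≤ 1/2 →
      1 ≤ 2 * (1/16:ℝ) ^ a + (1/16:ℝ) ^ (1 - 2*a) - (1/16:ℝ) ^ (2*a) := by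
    intro a ha0 ha1
    set u : ℝ := (1/16:ℝ) ^ a with hu
    have hu0 : 0 < u := Real.rpow_pos_of_pos hx0 a
    have hule : u ≤ 1 := Real.rpow_le_one (le_of_lt hx0) hx1 ha0
    have huge : (1/4:ℝ) ≤ u := by
      have := Real.rpow_le_rpow_of_exponent_ge hx0 hx1 ha1
      rwa [hquarter] at this
    have h2a : (1/16:ℝ) ^ (2*a) = u^2 := by
      rw [mul_comm, Real.rpow_mul (le_of_lt hx0), Real.rpow_two]
    have h12a : (1/16:ℝ) ^ (1 - 2*a) = (1/16) / u^2 := by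
      rw [Real.rpow_sub hx0, Real.rpow_one, h2a]
    rw [h2a, h12a]
    set v : ℝ := (1/16:ℝ) / u^2 with hvdef
    have hv : v * u^2 = 1/16 := by field_simp [hvdef]; rw [hvdef, div_mul_cancel₀ _ (pow_ne_zero 2 hu0.ne')]; norm_num
    have hfac : 0 ≤ (2*u - 1)^2 * (1 + 4*u - 4*u^2) := mul_nonneg (sq_nonneg _) (by nlinarith [mul_nonneg hu0.le (sub_nonneg.2 hule)])
    nlinarith [hv, hfac, mul_pos hu0 hu0, sq_nonneg (2*u-1)]
  refine ⟨key, ?_⟩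
  have h14 : ((1/16:ℝ)) ^ ((1:ℝ)/4) = 1/2 := by
    rw [show (1/16:ℝ) = (1/2:ℝ)^(4:ℕ) by norm_num, ← Real.rpow_natCast,
      ← Real.rpow_mul (by norm_num)]
    norm_num
  norm_num [h14, hquarter]
end

section
/- Let p ≤ q and m be positive integers with p + q ≤ m, and let Q(t) = 1 − 2t^p − 2t^q + 4t^(p+q) − t^m in ℤ[t]. If t^m · Q(1/t) = ε·Q(t) as polynomials for some ε ∈ {1, −1}, then p = q and m = 3p (and necessarily ε = −1). -/
open Polynomial

set_option maxHeartbeats 1000000 in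
theorem stmt11 (p q m : ℕ) (hp : 0 < p) (hpq : p ≤ q) (hqm : p + q ≤ m)
    (ε : ℤ) (hε : ε = 1 ∨ ε = -1)
    (h : Polynomial.reflect m
        ((1 : Polynomial ℤ) - 2 * X ^ p - 2 * X ^ q + 4 * X ^ (p + q) - X ^ m)
      = C ε * ((1 : Polynomial ℤ) - 2 * X ^ p - 2 * X ^ q + 4 * X ^ (p + q) - X ^ m)) :
    p = q ∧ m = 3 * p ∧ ε = -1 := by
  have hpm : p ≤ m := by omega
  have h0 := congrArg (fun f => Polynomial.coeff f 0) h
  have h1 := congrArg (fun f => Polynomial.coeff f p) h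
  clear h
  simp only [coeff_reflect, coeff_C_mul, coeff_sub, coeff_add, coeff_one, coeff_X_pow,
    coeff_ofNat_mul, mul_ite, mul_one, mul_zero, if_true, Nat.sub_zero,
    revAt_le (Nat.zero_le m), revAt_le hpm] at h0 h1
  have c1 : ¬ (m = 0) := by omega
  have c2 : ¬ (m = p) := by omega
  have c3 : ¬ (m = q) := by omega
  have c4 : ¬ ((0:ℕ) = p) := by omega
  have c5 : ¬ ((0:ℕ) = q) := by omega
  have c6 : ¬ ((0:ℕ) = p + q) := by omega
  have c7 : ¬ ((0:ℕ) = m) := by omega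
  have c8 : ¬ (m - p = 0) := by omega
  have c9 : ¬ (m - p = m) := by omega
  have c10 : ¬ (p = 0) := by omega
  have c11 : ¬ (p = p + q) := by omega
  have c12 : ¬ (p = m) := by omega
  simp only [if_neg c1, if_neg c2, if_neg c3, if_neg c4, if_neg c5, if_neg c6, if_neg c7,
    if_neg c8, if_neg c9, if_neg c10, if_neg c11, if_neg c12] at h0 h1
  rcases hε with hε | hε <;> subst hε <;> split_ifs at h0 h1 <;> omega
end
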